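/- arXiv:1607.04431 — 3 statements merged into one kernel-verified Lean document; each statement's English description precedes it below -/
import Mathlib

section
/- Let G be a 2-edge-connected graph (finite, undirected; parallel edges and self-loops allowed) with an edge st that is not a self-loop. Then G has a (1,1)-edge-order through st. -/
namespace EdgeOrders

variable {V E V' E' : Type}

/-- A multigraph on vertex type `V` and edge type `E` is given by a map `ends`
sending each edge to the unordered pair of its endpoints (self-loops and
parallel edges are allowed).
`IsWalkSeq ends vs es` states that `vs` is the vertex sequence and `es` the
edge sequence of a walk in this multigraph. -/
inductive IsWalkSeq (ends : E → Sym2 V) : List V → List E → Prop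
  | nil (v : V) : IsWalkSeq ends [v] []
  | cons {u v : V} {vs : List V} {e : E} {es : List E} :
      ends e = s(u, v) → IsWalkSeq ends (v :: vs) es →
      IsWalkSeq ends (u :: v :: vs) (e :: es)

/-- There is a walk from `u` to `v` using only edges from `S`. -/
def HasWalk (ends : E → Sym2 V) (S : Set E) (u v : V) : Prop :=
  ∃ vs es, IsWalkSeq ends vs es ∧ vs.head? = some u ∧ vs.getLast? = some v ∧
    ∀ e ∈ es, e ∈ S

/-- A multigraph is `k`-edge-connected if it has at least two vertices and no
edge-cut of size less than `k`: removing fewer than `k` edges leaves all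
vertices connected to each other. -/
def EdgeConnected [Fintype V] [Fintype E] (ends : E → Sym2 V) (k : ℕ) : Prop :=
  2 ≤ Fintype.card V ∧
    ∀ F : Finset E, F.card < k → ∀ u v : V, HasWalk ends {e | e ∉ F} u v

/-- Two edges are neighbors if they share a common vertex. -/
def Neighbors (ends : E → Sym2 V) (e f : E) : Prop :=
  ∃ x, x ∈ ends e ∧ x ∈ ends f

/-- A (1,1)-edge-order through the (non-self-loop) edge `st` with endpoints
`s` and `t`: a (strict) total order `lt` on `E - {st}` such that `m ≥ 2`,
every edge not incident to `s` has a smaller neighbor and every edge not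
incident to `t` has a larger neighbor. -/
def IsOneOneEdgeOrder [Fintype E] (ends : E → Sym2 V) (s t : V) (st : E)
    (lt : E → E → Prop) : Prop :=
  2 ≤ Fintype.card E ∧
  (∀ e f, lt e f → e ≠ st ∧ f ≠ st) ∧
  (∀ e, ¬ lt e e) ∧
  (∀ e f g, lt e f → lt f g → lt e g) ∧
  (∀ e f, e ≠ st → f ≠ st → e ≠ f → lt e f ∨ lt f e) ∧
  (∀ e, e ≠ st → s ∉ ends e → ∃ f, Neighbors ends e f ∧ lt f e) ∧
  (∀ e, e ≠ st → t ∉ ends e → ∃ f, Neighbors ends e f ∧ lt e f)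

/-- An ear: a subgraph given as the vertex sequence and edge sequence of a
walk (a path, or a cycle when the first and last vertices coincide). -/
structure Ear (V E : Type) where
  verts : List V
  edges : List E

/-- An ear decomposition `(P₀, …, P_len)` of the multigraph given by `ends`:
a sequence of ears partitioning the edge set, where `P₀` is a cycle that is
not a self-loop, and each later ear is either a path intersecting the union
of the previous ears exactly in its two endpoints, or a cycle intersecting it
in a unique vertex. -/
structure EarDecomposition (ends : E → Sym2 V) where
  len : ℕ
  ears : Fin (len + 1) → Ear V E
  /-- every ear is a walk in the graph -/
  walk : ∀ i, IsWalkSeq ends (ears i).verts (ears i).edges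
  /-- no ear repeats an edge -/
  edges_nodup : ∀ i, (ears i).edges.Nodup
  /-- the ears partition the edge set -/
  partition : ∀ e : E, ∃! i, e ∈ (ears i).edges
  /-- the ears cover all vertices (their union is the whole graph) -/
  covers : ∀ v : V, ∃ i, v ∈ (ears i).verts
  /-- every ear contains at least one edge -/
  ear_nonempty : ∀ i, (ears i).edges ≠ []
  /-- `P₀` is a cycle … -/
  first_closed : (ears 0).verts.head? = (ears 0).verts.getLast?
  first_nodup : (ears 0).verts.tail.Nodup
  /-- … that is not a self-loop -/
  first_not_loop : 2 ≤ (ears 0).edges.length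
  /-- every later ear is a path (distinct vertices) or a cycle (closed, with
  distinct vertices except for the repeated endpoint) -/
  ear_path_or_cycle : ∀ i : Fin (len + 1), 0 < (i : ℕ) →
    (ears i).verts.Nodup ∨
      ((ears i).verts.head? = (ears i).verts.getLast? ∧ (ears i).verts.tail.Nodup)
  /-- the endpoint(s) of a later ear lie in the union of the previous ears -/
  ear_endpoints : ∀ i : Fin (len + 1), 0 < (i : ℕ) → ∀ x : V,
    ((ears i).verts.head? = some x ∨ (ears i).verts.getLast? = some x) →
      ∃ j, j < i ∧ x ∈ (ears j).verts
  /-- the inner vertices of a later ear avoid all previous ears -/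
  ear_inner_new : ∀ i : Fin (len + 1), 0 < (i : ℕ) →
    ∀ x ∈ (ears i).verts.tail.dropLast, ∀ j, j < i → x ∉ (ears j).verts

variable {ends : E → Sym2 V}

/-- The vertex set of `G_{i-1} = P₀ ∪ ⋯ ∪ P_{i-1}`. -/
def EarDecomposition.prevVerts (D : EarDecomposition ends) (i : Fin (D.len + 1)) : Set V :=
  {x | ∃ j, j < i ∧ x ∈ (D.ears j).verts}

/-- `inner(P_i)`, the set of inner vertices of the `i`-th ear. -/
def EarDecomposition.innerVerts (D : EarDecomposition ends) (i : Fin (D.len + 1)) : Set V :=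
  {x | x ∈ (D.ears i).verts ∧ x ∉ D.prevVerts i}

/-- The edge set `E - E_i` of `\overline{G_i}`. -/
def EarDecomposition.remEdges (D : EarDecomposition ends) (i : Fin (D.len + 1)) : Set E :=
  {e | ∃ j, i < j ∧ e ∈ (D.ears j).edges}

/-- `birth(e)`: the index of the unique ear containing the edge `e`. -/
noncomputable def EarDecomposition.birthE (D : EarDecomposition ends) (e : E) :
    Fin (D.len + 1) := (D.partition e).exists.choose

open Classical in
/-- `last(v)`: the maximal index `birth(vw)` over all edges `vw` incident to `v`. -/
noncomputable def EarDecomposition.lastV [Fintype E] (D : EarDecomposition ends) (v : V) : ℕ :=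
  (Finset.univ.filter fun e => v ∈ ends e).sup fun e => (D.birthE e : ℕ)

/-- The vertices of the subgraph induced by the edge set `S`. -/
def coverVerts (ends : E → Sym2 V) (S : Set E) : Set V :=
  {v | ∃ e ∈ S, v ∈ ends e}

/-- The subgraph induced by the edge set `S` is connected. -/
def ConnectedOn (ends : E → Sym2 V) (S : Set E) : Prop :=
  ∀ u ∈ coverVerts ends S, ∀ v ∈ coverVerts ends S, HasWalk ends S u v

/-- Definition 4.1: `D` is a (2,1)-edge-order through `rt` avoiding `ru`:
(1) `rt ∈ P₀`; (2) the last ear is the short ear `ru`; (3) non-separateness: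
for every `i < m - n`, `\overline{G_i}` contains all inner vertices of `P_i`
and, if `P_i` is short, at least one endpoint of `P_i`. -/
def IsTwoOneEdgeOrder (D : EarDecomposition ends) (rt ru : E) : Prop :=
  rt ∈ (D.ears 0).edges ∧
  (D.ears (Fin.last D.len)).edges = [ru] ∧
  ∀ i : Fin (D.len + 1), (i : ℕ) < D.len →
    (∀ x ∈ D.innerVerts i, x ∈ coverVerts ends (D.remEdges i)) ∧
    ((D.ears i).edges.length = 1 →
      ∃ x, ((D.ears i).verts.head? = some x ∨ (D.ears i).verts.getLast? = some x) ∧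
        x ∈ coverVerts ends (D.remEdges i))

open Classical in
/-- The degree of a vertex in a multigraph; self-loops count twice. -/
noncomputable def degree [Fintype E] (ends : E → Sym2 V) (v : V) : ℕ :=
  ∑ e : E, (if ends e = s(v, v) then 2 else if v ∈ ends e then 1 else 0)

/-- `T` is the edge set of a tree on the vertex set `W`: all its edges join
vertices of `W`, it connects any two vertices of `W`, and it contains no
nonempty closed trail (i.e. no cycle). -/
def IsTreeOn (ends : E → Sym2 V) (W : Set V) (T : Set E) : Prop :=
  (∀ e ∈ T, ∀ x, x ∈ ends e → x ∈ W) ∧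
  (∀ u ∈ W, ∀ v ∈ W, HasWalk ends T u v) ∧
  (∀ vs es, IsWalkSeq ends vs es → (∀ e ∈ es, e ∈ T) → es.Nodup →
    vs.head? = vs.getLast? → es = [])

/-- `T` is the edge set of a spanning tree of the whole multigraph. -/
def IsSpanningTree (ends : E → Sym2 V) (T : Set E) : Prop :=
  IsTreeOn ends Set.univ T

/-- `(vs, es)` is a (simple) path from `x` to `r` using only edges of `T`. -/
def IsPathIn (ends : E → Sym2 V) (T : Set E) (x r : V)
    (vs : List V) (es : List E) : Prop :=
  IsWalkSeq ends vs es ∧ vs.Nodup ∧ vs.head? = some x ∧ vs.getLast? = some r ∧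
    ∀ e ∈ es, e ∈ T

/-- The paths from `x` to the common root `r` inside `T₁` and inside `T₂` are
edge-disjoint. -/
def EdgeIndepFrom (ends : E → Sym2 V) (T₁ T₂ : Set E) (r x : V) : Prop :=
  ∀ vs₁ es₁ vs₂ es₂, IsPathIn ends T₁ x r vs₁ es₁ → IsPathIn ends T₂ x r vs₂ es₂ →
    ∀ e ∈ es₁, e ∉ es₂

/-!
The order is built as a list `L` of edges, read from left to right. Start with an `s`–`t` trail
avoiding `st`; as long as some edge other than `st` is missing, 2-edge-connectivity yields an ear:
a nonempty trail outside `L ∪ {st}` whose two ends lie on `L`. Inserting the ear into `L` as a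
contiguous block preserves the invariant that every edge of `L` not at `s` has an earlier neighbor
and every edge not at `t` a later one, provided the block comes after some edge at its first end
(or that end is `s`) and before some edge at its last end (or that end is `t`). One of the two
orientations of the ear always fits, because every vertex of `L` other than `s` and `t` lies on two
edges of `L`.
-/

open List

theorem _root_.List.pair_sublist_or_pair_sublist {α : Type*} {a b : α} {l : List α}
    (ha : a ∈ l) (hb : b ∈ l) (hab : a ≠ b) : [a, b] <+ l ∨ [b, a] <+ l := by
  induction l with
  | nil => simp at ha
  | cons c l ih =>
    rcases mem_cons.1 ha with rfl | hal
    · exact Or.inl ((singleton_sublist.2 ((mem_cons.1 hb).resolve_left hab.symm)).cons_cons a)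
    rcases mem_cons.1 hb with rfl | hbl
    · exact Or.inr ((singleton_sublist.2 hal).cons_cons b)
    exact (ih hal hbl).imp (Sublist.cons c) (Sublist.cons c)

theorem _root_.List.Nodup.pair_sublist_trans {α : Type*} {a b c : α} {l : List α}
    (hl : l.Nodup) (hab : [a, b] <+ l) (hbc : [b, c] <+ l) : [a, c] <+ l := by
  induction l with
  | nil => simp at hab
  | cons d l ih =>
    obtain ⟨hdl, hl⟩ := nodup_cons.1 hl
    rcases sublist_cons_iff.1 hab with hab | ⟨r, hr, hbl⟩
    · have hbd : b ≠ d := fun h => hdl (h ▸ hab.subset (by simp))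
      rcases sublist_cons_iff.1 hbc with hbc | ⟨r', hr', -⟩
      · exact (ih hl hab hbc).cons d
      · exact absurd (cons.inj hr').1 hbd
    · obtain ⟨rfl, rfl⟩ := cons.inj hr
      rcases sublist_cons_iff.1 hbc with hbc | ⟨r', hr', -⟩
      · exact (singleton_sublist.2 (hbc.subset (by simp))).cons_cons a
      · exact absurd ((cons.inj hr').1 ▸ singleton_sublist.1 hbl) hdl

theorem _root_.List.mem_of_pair_sublist_cons {α : Type*} {a b : α} {l : List α}
    (h : [a, b] <+ b :: l) : b ∈ l := by
  rcases sublist_cons_iff.1 h with h | ⟨r, hr, hrl⟩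
  · exact h.subset (by simp)
  · exact singleton_sublist.1 ((cons.inj hr).2 ▸ hrl)

theorem _root_.List.exists_of_forall_exists_length_lt {α : Type*} [Fintype α]
    {P Q : List α → Prop} (hnodup : ∀ L, P L → L.Nodup)
    (hgrow : ∀ L, P L → ¬ Q L → ∃ L', P L' ∧ L.length < L'.length)
    {L : List α} (hL : P L) : ∃ L', P L' ∧ Q L' := by
  induction h : Fintype.card α - L.length using Nat.strong_induction_on generalizing L with
  | _ n ih =>
    by_cases hQ : Q L
    · exact ⟨L, hL, hQ⟩
    obtain ⟨L', hL', hlt⟩ := hgrow L hL hQ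
    exact ih _ (by have := (hnodup L' hL').length_le_card; omega) hL' rfl

inductive IsWalk (ends : E → Sym2 V) : V → V → List E → Prop
  | nil (v : V) : IsWalk ends v v []
  | cons {u v w : V} {e : E} {es : List E} :
      ends e = s(u, v) → IsWalk ends v w es → IsWalk ends u w (e :: es)

theorem IsWalkSeq.isWalk {vs : List V} {es : List E} (h : IsWalkSeq ends vs es) {u v : V}
    (hu : vs.head? = some u) (hv : vs.getLast? = some v) : IsWalk ends u v es := by
  induction h generalizing u with
  | nil w =>
    obtain rfl : w = u := by simpa using hu
    obtain rfl : w = v := by simpa using hv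
    exact .nil w
  | cons he _ ih =>
    obtain rfl := Option.some.inj hu
    exact .cons he (ih rfl (by simpa [List.getLast?_cons_cons] using hv))

theorem EdgeConnected.exists_isWalk_not_mem [Fintype V] [Fintype E]
    (h : EdgeConnected ends 2) (e : E) (u v : V) : ∃ es, IsWalk ends u v es ∧ e ∉ es := by
  obtain ⟨vs, es, hw, hu, hv, hes⟩ := h.2 {e} (by simp) u v
  exact ⟨es, hw.isWalk hu hv, fun he => hes e he (Finset.mem_singleton_self e)⟩

namespace IsWalk

variable {u v w : V} {es : List E}

theorem append {fs : List E} (hes : IsWalk ends u v es) (hfs : IsWalk ends v w fs) :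
    IsWalk ends u w (es ++ fs) := by
  induction hes with
  | nil => exact hfs
  | cons he _ ih => exact .cons he (ih hfs)

theorem reverse (h : IsWalk ends u v es) : IsWalk ends v u es.reverse := by
  induction h with
  | nil v => exact .nil v
  | cons he _ ih =>
    rw [List.reverse_cons]
    exact ih.append (.cons (he.trans Sym2.eq_swap) (.nil _))

theorem exists_suffix (h : IsWalk ends v w es) {u : V} (hu : u = v ∨ ∃ e ∈ es, u ∈ ends e) :
    ∃ es', es' <:+ es ∧ IsWalk ends u w es' := by
  induction h with
  | nil v =>
    obtain rfl : u = v := by simpa using hu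
    exact ⟨[], suffix_refl _, .nil u⟩
  | @cons a b c e rest he hrest ih =>
    rcases hu with rfl | ⟨f, hf, huf⟩
    · exact ⟨e :: rest, suffix_refl _, .cons he hrest⟩
    rcases mem_cons.1 hf with rfl | hf
    · rw [he, Sym2.mem_iff] at huf
      rcases huf with rfl | rfl
      · exact ⟨f :: rest, suffix_refl _, .cons he hrest⟩
      · exact ⟨rest, suffix_cons _ _, hrest⟩
    · obtain ⟨es', hsuf, hw⟩ := ih (Or.inr ⟨f, hf, huf⟩)
      exact ⟨es', hsuf.trans (suffix_cons _ _), hw⟩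

theorem exists_trail (h : IsWalk ends u w es) :
    ∃ es', IsWalk ends u w es' ∧ es'.Nodup ∧ es' <+ es := by
  induction h with
  | nil v => exact ⟨[], .nil v, nodup_nil, Sublist.refl _⟩
  | @cons a b c e rest he _ ih =>
    obtain ⟨es', hw, hnd, hsub⟩ := ih
    by_cases ha : a = b ∨ ∃ f ∈ es', a ∈ ends f
    · obtain ⟨es'', hsuf, hw'⟩ := hw.exists_suffix ha
      exact ⟨es'', hw', hnd.sublist hsuf.sublist, (hsuf.sublist.trans hsub).cons e⟩
    · refine ⟨e :: es', .cons he hw, nodup_cons.2 ⟨fun he' => ?_, hnd⟩, hsub.cons_cons e⟩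
      exact ha (Or.inr ⟨e, he', by simp [he]⟩)

theorem exists_crossing (h : IsWalk ends u v es) {C : Set V} (hu : u ∉ C) (hv : v ∈ C) :
    ∃ e x y, ends e = s(x, y) ∧ x ∉ C ∧ y ∈ C := by
  induction h with
  | nil => exact absurd hv hu
  | @cons a b c e rest he _ ih =>
    by_cases hb : b ∈ C
    · exact ⟨e, a, b, he, hu, hb⟩
    · exact ih hb hv

theorem exists_prefix_to (h : IsWalk ends u v es) {C : Set V} (hv : v ∈ C) :
    ∃ w ∈ C, ∃ es', es' <+: es ∧ IsWalk ends u w es' ∧ ∀ e ∈ es', ∃ x ∈ ends e, x ∉ C := by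
  induction h with
  | nil v => exact ⟨v, hv, [], prefix_refl _, .nil v, by simp⟩
  | @cons a b c e rest he _ ih =>
    by_cases ha : a ∈ C
    · exact ⟨a, ha, [], nil_prefix, .nil a, by simp⟩
    obtain ⟨w, hw, es', hpre, hwalk, hout⟩ := ih hv
    refine ⟨w, hw, e :: es', (prefix_cons_inj e).2 hpre, .cons he hwalk, fun f hf => ?_⟩
    rcases mem_cons.1 hf with rfl | hf
    · exact ⟨a, by simp [he], ha⟩
    · exact hout f hf

theorem exists_before (h : IsWalk ends u v es) {e : E} (he : e ∈ es) :
    u ∈ ends e ∨ ∃ f, Neighbors ends e f ∧ [f, e] <+ es := by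
  induction h with
  | nil => simp at he
  | @cons a b c f rest hf _ ih =>
    rcases mem_cons.1 he with rfl | he
    · exact Or.inl (by simp [hf])
    right
    rcases ih he with hb | ⟨g, hg, hsub⟩
    · exact ⟨f, ⟨b, hb, by simp [hf]⟩, (singleton_sublist.2 he).cons_cons f⟩
    · exact ⟨g, hg, hsub.cons f⟩

theorem exists_two_edges (h : IsWalk ends u v es) (hnd : es.Nodup) {z : V}
    (hz : ∃ e ∈ es, z ∈ ends e) (hzu : z ≠ u) (hzv : z ≠ v) :
    ∃ e ∈ es, ∃ f ∈ es, e ≠ f ∧ z ∈ ends e ∧ z ∈ ends f := by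
  induction h with
  | nil => simp at hz
  | @cons a b c e rest he hrest ih =>
    obtain ⟨herest, hnd⟩ := nodup_cons.1 hnd
    by_cases hzb : z = b
    · subst hzb
      cases hrest with
      | nil => exact absurd rfl hzv
      | cons hf _ =>
        exact ⟨e, mem_cons_self, _, mem_cons_of_mem e mem_cons_self,
          fun h => herest (h ▸ mem_cons_self), by simp [he], by simp [hf]⟩
    obtain ⟨g, hg, hzg⟩ := hz
    rcases mem_cons.1 hg with rfl | hg
    · rw [he, Sym2.mem_iff] at hzg
      exact absurd (hzg.resolve_left hzu) hzb
    obtain ⟨e₁, he₁, e₂, he₂, hne, h₁, h₂⟩ := ih hnd ⟨g, hg, hzg⟩ hzb hzv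
    exact ⟨e₁, mem_cons_of_mem e he₁, e₂, mem_cons_of_mem e he₂, hne, h₁, h₂⟩

end IsWalk

theorem exists_attached_edge_not_mem [Fintype V] [Fintype E] (h : EdgeConnected ends 2)
    {C : Set V} {F : Set E} (hF : ∀ e ∈ F, ∀ x ∈ ends e, x ∈ C) {c : V} (hc : c ∈ C)
    {e' : E} (he' : e' ∉ F) : ∃ e u v, ends e = s(u, v) ∧ u ∈ C ∧ e ∉ F := by
  obtain ⟨a, b, hab⟩ : ∃ a b, ends e' = s(a, b) :=
    Sym2.inductionOn (ends e') fun a b => ⟨a, b, rfl⟩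
  by_cases ha : a ∈ C
  · exact ⟨e', a, b, hab, ha, he'⟩
  obtain ⟨es, hw, -⟩ := h.exists_isWalk_not_mem e' a c
  obtain ⟨e, x, y, hxy, hx, hy⟩ := hw.exists_crossing ha hc
  exact ⟨e, y, x, hxy.trans Sym2.eq_swap, hy, fun heF => hx (hF e heF x (by simp [hxy]))⟩

theorem exists_ear [Fintype V] [Fintype E] (h : EdgeConnected ends 2)
    {C : Set V} {F : Set E} (hF : ∀ e ∈ F, ∀ x ∈ ends e, x ∈ C) {c : V} (hc : c ∈ C)
    {e' : E} (he' : e' ∉ F) :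
    ∃ x y es, IsWalk ends x y es ∧ es ≠ [] ∧ es.Nodup ∧ (∀ e ∈ es, e ∉ F) ∧ x ∈ C ∧ y ∈ C := by
  obtain ⟨e₀, u, v, h₀, hu, he₀⟩ := exists_attached_edge_not_mem h hF hc he'
  by_cases hv : v ∈ C
  · exact ⟨u, v, [e₀], .cons h₀ (.nil v), by simp, by simp, by simpa using he₀, hu, hv⟩
  -- close the ear through `e₀` by a walk back to `C` that avoids `e₀`
  obtain ⟨ws, hws, he₀ws⟩ := h.exists_isWalk_not_mem e₀ v u
  obtain ⟨w, hw, ps, hps, hpw, hout⟩ := hws.exists_prefix_to hu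
  obtain ⟨qs, hqw, hqnd, hqs⟩ := hpw.exists_trail
  refine ⟨u, w, e₀ :: qs, .cons h₀ hqw, by simp, nodup_cons.2 ⟨?_, hqnd⟩, ?_, hu, hw⟩
  · exact fun he₀qs => he₀ws (hps.subset (hqs.subset he₀qs))
  · intro e he heF
    rcases mem_cons.1 he with rfl | he
    · exact he₀ heF
    obtain ⟨x, hx, hxC⟩ := hout e (hqs.subset he)
    exact hxC (hF e heF x hx)

def HasEarlierNeighbors (ends : E → Sym2 V) (s : V) (L : List E) : Prop :=
  ∀ e ∈ L, s ∉ ends e → ∃ f, Neighbors ends e f ∧ [f, e] <+ L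

theorem HasEarlierNeighbors.exists_mem_ends {s : V} {L : List E}
    (h : HasEarlierNeighbors ends s L) (hnd : L.Nodup) (hne : L ≠ []) : ∃ e ∈ L, s ∈ ends e := by
  obtain ⟨e, L', rfl⟩ := exists_cons_of_ne_nil hne
  by_contra! hs
  obtain ⟨f, -, hfe⟩ := h e mem_cons_self (hs e mem_cons_self)
  exact (nodup_cons.1 hnd).1 (mem_of_pair_sublist_cons hfe)

theorem HasEarlierNeighbors.insert_walk {s x y : V} {L₁ L₂ es : List E}
    (h : HasEarlierNeighbors ends s (L₁ ++ L₂)) (hw : IsWalk ends x y es)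
    (hx : x = s ∨ ∃ g ∈ L₁, x ∈ ends g) : HasEarlierNeighbors ends s (L₁ ++ es ++ L₂) := by
  have hsub : L₁ ++ L₂ <+ L₁ ++ es ++ L₂ := by
    rw [append_assoc]
    exact (Sublist.refl L₁).append (sublist_append_right es L₂)
  intro e he hs
  rcases mem_append.1 he with he | he
  · rcases mem_append.1 he with he | he
    · obtain ⟨f, hef, hfe⟩ := h e (mem_append_left _ he) hs
      exact ⟨f, hef, hfe.trans hsub⟩
    rcases hw.exists_before he with hxe | ⟨f, hef, hfe⟩
    · obtain ⟨g, hg, hxg⟩ := hx.resolve_left fun hxs => hs (hxs ▸ hxe)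
      refine ⟨g, ⟨x, hxe, hxg⟩, ?_⟩
      have : [g] ++ [e] <+ L₁ ++ es :=
        (singleton_sublist.2 hg).append (singleton_sublist.2 he)
      exact this.trans (sublist_append_left _ _)
    · exact ⟨f, hef, hfe.trans (infix_append L₁ es L₂).sublist⟩
  · obtain ⟨f, hef, hfe⟩ := h e (mem_append_right _ he) hs
    exact ⟨f, hef, hfe.trans hsub⟩

/-- `L` lists edges from earliest to latest; the condition at `t` (a later neighbor) is stated as
an earlier neighbor in `L.reverse`. -/
structure IsPartialOneOneOrder (ends : E → Sym2 V) (s t : V) (st : E) (L : List E) : Prop where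
  nodup : L.Nodup
  st_notMem : st ∉ L
  /-- this is what lets every ear be inserted in one of its two orientations -/
  two_edges : ∀ v ∈ coverVerts ends {e | e ∈ L}, v ≠ s → v ≠ t →
    ∃ e ∈ L, ∃ f ∈ L, e ≠ f ∧ v ∈ ends e ∧ v ∈ ends f
  before : HasEarlierNeighbors ends s L
  after : HasEarlierNeighbors ends t L.reverse

/-- The ear from `x` to `y` can be inserted into `L` as a block between `L₁` and `L₂`. -/
def AdmitsEar (ends : E → Sym2 V) (s t : V) (L : List E) (x y : V) : Prop :=
  ∃ L₁ L₂, L = L₁ ++ L₂ ∧ (x = s ∨ ∃ g ∈ L₁, x ∈ ends g) ∧ (y = t ∨ ∃ h ∈ L₂, y ∈ ends h)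

namespace IsPartialOneOneOrder

variable {s t : V} {st : E} {L : List E}

theorem nil : IsPartialOneOneOrder ends s t st [] :=
  ⟨nodup_nil, not_mem_nil, by simp [coverVerts], by simp [HasEarlierNeighbors],
    by simp [HasEarlierNeighbors]⟩

theorem insert_ear {L₁ L₂ es : List E} {x y : V}
    (hL : IsPartialOneOneOrder ends s t st (L₁ ++ L₂)) (hw : IsWalk ends x y es)
    (hnd : es.Nodup) (hes : ∀ e ∈ es, e ∉ L₁ ++ L₂ ∧ e ≠ st)
    (hx : x = s ∨ ∃ g ∈ L₁, x ∈ ends g) (hy : y = t ∨ ∃ h ∈ L₂, y ∈ ends h) :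
    IsPartialOneOneOrder ends s t st (L₁ ++ es ++ L₂) where
  nodup := by
    refine (perm_append_comm.append_right L₂).nodup_iff.2 ?_
    rw [append_assoc]
    exact nodup_append.2 ⟨hnd, hL.nodup, fun a ha b hb hab => (hes a ha).1 (hab ▸ hb)⟩
  st_notMem := by
    simp only [mem_append, not_or]
    exact ⟨⟨fun h => hL.st_notMem (mem_append_left _ h), fun h => (hes st h).2 rfl⟩,
      fun h => hL.st_notMem (mem_append_right _ h)⟩
  two_edges := by
    have hsub : L₁ ++ L₂ ⊆ L₁ ++ es ++ L₂ := by intro e; simp +contextual [or_imp]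
    rintro v ⟨e, he, hve⟩ hvs hvt
    by_cases hvL : ∃ f ∈ L₁ ++ L₂, v ∈ ends f
    · obtain ⟨f, hf, hvf⟩ := hvL
      obtain ⟨e₁, he₁, e₂, he₂, hne, h₁, h₂⟩ := hL.two_edges v ⟨f, hf, hvf⟩ hvs hvt
      exact ⟨e₁, hsub he₁, e₂, hsub he₂, hne, h₁, h₂⟩
    have hves : e ∈ es := by
      rcases mem_append.1 he with he | he
      rcases mem_append.1 he with he | he
      · exact absurd ⟨e, mem_append_left _ he, hve⟩ hvL
      · exact he
      · exact absurd ⟨e, mem_append_right _ he, hve⟩ hvL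
    have hvx : v ≠ x := by
      rintro rfl
      obtain ⟨g, hg, hvg⟩ := hx.resolve_left hvs
      exact hvL ⟨g, mem_append_left _ hg, hvg⟩
    have hvy : v ≠ y := by
      rintro rfl
      obtain ⟨h, hh, hvh⟩ := hy.resolve_left hvt
      exact hvL ⟨h, mem_append_right _ hh, hvh⟩
    obtain ⟨e₁, he₁, e₂, he₂, hne, h₁, h₂⟩ := hw.exists_two_edges hnd ⟨e, hves, hve⟩ hvx hvy
    have hsub' : es ⊆ L₁ ++ es ++ L₂ := (infix_append L₁ es L₂).subset
    exact ⟨e₁, hsub' he₁, e₂, hsub' he₂, hne, h₁, h₂⟩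
  before := hL.before.insert_walk hw hx
  after := by
    have h := hL.after
    simp only [reverse_append, append_assoc] at h ⊢
    rw [← append_assoc]
    exact h.insert_walk hw.reverse (by simpa using hy)

theorem s_mem_coverVerts (hL : IsPartialOneOneOrder ends s t st L) (hne : L ≠ []) :
    s ∈ coverVerts ends {e | e ∈ L} :=
  hL.before.exists_mem_ends hL.nodup hne

theorem t_mem_coverVerts (hL : IsPartialOneOneOrder ends s t st L) (hne : L ≠ []) :
    t ∈ coverVerts ends {e | e ∈ L} := by
  obtain ⟨e, he, hte⟩ := hL.after.exists_mem_ends (nodup_reverse.2 hL.nodup) (by simpa using hne)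
  exact ⟨e, mem_reverse.1 he, hte⟩

theorem admitsEar_or_admitsEar_swap (hL : IsPartialOneOneOrder ends s t st L) {x y : V}
    (hx : x ∈ coverVerts ends {e | e ∈ L}) (hy : y ∈ coverVerts ends {e | e ∈ L}) :
    AdmitsEar ends s t L x y ∨ AdmitsEar ends s t L y x := by
  have of_pair {a b : V} {g h : E} (hgh : [g, h] <+ L) (hag : a ∈ ends g) (hbh : b ∈ ends h) :
      AdmitsEar ends s t L a b := by
    obtain ⟨L₁, L₂, rfl, hg, hh⟩ := cons_sublist_iff.1 hgh
    exact ⟨L₁, L₂, rfl, Or.inr ⟨g, hg, hag⟩, Or.inr ⟨h, singleton_sublist.1 hh, hbh⟩⟩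
  have of_left {a b : V} (ha : a = s) (hb : b ∈ coverVerts ends {e | e ∈ L}) :
      AdmitsEar ends s t L a b := by
    obtain ⟨h, hh, hbh⟩ := hb
    obtain ⟨L₁, L₂, rfl⟩ := append_of_mem hh
    exact ⟨L₁, h :: L₂, rfl, Or.inl ha, Or.inr ⟨h, mem_cons_self, hbh⟩⟩
  have of_right {a b : V} (ha : a ∈ coverVerts ends {e | e ∈ L}) (hb : b = t) :
      AdmitsEar ends s t L a b := by
    obtain ⟨g, hg, hag⟩ := ha
    obtain ⟨L₁, L₂, rfl⟩ := append_of_mem hg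
    exact ⟨L₁ ++ [g], L₂, by simp, Or.inr ⟨g, by simp, hag⟩, Or.inl hb⟩
  by_cases hxs : x = s; · exact Or.inl (of_left hxs hy)
  by_cases hyt : y = t; · exact Or.inl (of_right hx hyt)
  by_cases hys : y = s; · exact Or.inr (of_left hys hx)
  by_cases hxt : x = t; · exact Or.inr (of_right hy hxt)
  -- otherwise some edge at `x` differs from a given edge at `y`, and their order decides
  obtain ⟨g₁, hg₁, g₂, hg₂, hne, hxg₁, hxg₂⟩ := hL.two_edges x hx hxs hxt
  obtain ⟨h, hh, hyh⟩ := hy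
  obtain ⟨g, hg, hxg, hgh⟩ : ∃ g ∈ L, x ∈ ends g ∧ g ≠ h := by
    by_cases h₁ : g₁ = h
    · exact ⟨g₂, hg₂, hxg₂, fun h₂ => hne (h₁.trans h₂.symm)⟩
    · exact ⟨g₁, hg₁, hxg₁, h₁⟩
  rcases pair_sublist_or_pair_sublist hg hh hgh with hgh | hhg
  · exact Or.inl (of_pair hgh hxg hyh)
  · exact Or.inr (of_pair hhg hyh hxg)

theorem exists_length_lt [Fintype V] [Fintype E] (h2 : EdgeConnected ends 2)
    (hst : ends st = s(s, t)) (hL : IsPartialOneOneOrder ends s t st L) (hne : L ≠ [])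
    {e' : E} (he'L : e' ∉ L) (he'st : e' ≠ st) :
    ∃ L', IsPartialOneOneOrder ends s t st L' ∧ L.length < L'.length := by
  have hF : ∀ e ∈ {e | e ∈ L ∨ e = st}, ∀ x ∈ ends e, x ∈ coverVerts ends {e | e ∈ L} := by
    rintro e (he | rfl) x hx
    · exact ⟨e, he, hx⟩
    · rcases Sym2.mem_iff.1 (hst ▸ hx) with rfl | rfl
      exacts [hL.s_mem_coverVerts hne, hL.t_mem_coverVerts hne]
  obtain ⟨x, y, es, hw, hes, hnd, hesF, hx, hy⟩ :=
    exists_ear h2 hF (hL.s_mem_coverVerts hne) (e' := e') (not_or.2 ⟨he'L, he'st⟩)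
  have hdisj : ∀ e ∈ es, e ∉ L ∧ e ≠ st := fun e he => not_or.1 (hesF e he)
  have hlen : 0 < es.length := length_pos_iff.2 hes
  rcases hL.admitsEar_or_admitsEar_swap hx hy with ⟨L₁, L₂, rfl, hx', hy'⟩ | ⟨L₁, L₂, rfl, hy', hx'⟩
  · exact ⟨L₁ ++ es ++ L₂, hL.insert_ear hw hnd hdisj hx' hy', by simp; omega⟩
  · exact ⟨L₁ ++ es.reverse ++ L₂, hL.insert_ear hw.reverse (nodup_reverse.2 hnd)
      (fun e he => hdisj e (mem_reverse.1 he)) hy' hx', by simp; omega⟩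

theorem exists_ne_nil [Fintype V] [Fintype E] (h2 : EdgeConnected ends 2) (hloop : s ≠ t) :
    ∃ L, IsPartialOneOneOrder ends s t st L ∧ L ≠ [] := by
  obtain ⟨ws, hws, hstws⟩ := h2.exists_isWalk_not_mem st s t
  obtain ⟨es, hes, hnd, hsub⟩ := hws.exists_trail
  refine ⟨es, ?_, ?_⟩
  · simpa using (nil (s := s) (t := t) (st := st)).insert_ear (L₁ := []) (L₂ := []) hes hnd
      (fun e he => ⟨not_mem_nil, fun h => hstws (h ▸ hsub.subset he)⟩) (Or.inl rfl) (Or.inl rfl)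
  · rintro rfl
    cases hes
    exact hloop rfl

theorem isOneOneEdgeOrder [Fintype E] (hL : IsPartialOneOneOrder ends s t st L)
    (hall : ∀ e, e ≠ st → e ∈ L) (hcard : 2 ≤ Fintype.card E) :
    IsOneOneEdgeOrder ends s t st fun e f => [e, f] <+ L := by
  refine ⟨hcard, fun e f hef => ⟨?_, ?_⟩, fun e hee => nodup_iff_sublist.1 hL.nodup e hee,
    fun e f g => hL.nodup.pair_sublist_trans, fun e f he hf hef =>
      pair_sublist_or_pair_sublist (hall e he) (hall f hf) hef,
    fun e he hse => hL.before e (hall e he) hse, fun e he hte => ?_⟩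
  · exact fun h => hL.st_notMem (h ▸ hef.subset (by simp))
  · exact fun h => hL.st_notMem (h ▸ hef.subset (by simp))
  · obtain ⟨f, hef, hfe⟩ := hL.after e (mem_reverse.2 (hall e he)) hte
    exact ⟨f, hef, by simpa using reverse_sublist.2 hfe⟩

end IsPartialOneOneOrder

/-- Every 2-edge-connected multigraph with a non-self-loop
edge `st` has a (1,1)-edge-order through `st`. -/
theorem statement_1 {V E : Type} [Fintype V] [Fintype E] (ends : E → Sym2 V)
    (s t : V) (st : E) (hst : ends st = s(s, t)) (hloop : s ≠ t)
    (h2 : EdgeConnected ends 2) :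
    ∃ lt : E → E → Prop, IsOneOneEdgeOrder ends s t st lt := by
  obtain ⟨L₀, hL₀, hne₀⟩ := IsPartialOneOneOrder.exists_ne_nil (st := st) h2 hloop
  obtain ⟨L, ⟨hL, -⟩, hall⟩ := exists_of_forall_exists_length_lt
    (P := fun L => IsPartialOneOneOrder ends s t st L ∧ L ≠ [])
    (Q := fun L => ∀ e, e ≠ st → e ∈ L) (fun L hL => hL.1.nodup)
    (fun L ⟨hL, hne⟩ hQ => by
      obtain ⟨e', he'st, he'L⟩ : ∃ e', e' ≠ st ∧ e' ∉ L := by simpa using hQ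
      obtain ⟨L', hL', hlt⟩ := hL.exists_length_lt h2 hst hne he'L he'st
      exact ⟨L', ⟨hL', ne_nil_of_length_pos (by omega)⟩, hlt⟩)
    ⟨hL₀, hne₀⟩
  obtain ⟨e₀, he₀⟩ := exists_mem_of_ne_nil L₀ hne₀
  have hcard : 2 ≤ Fintype.card E :=
    Fintype.one_lt_card_iff.2 ⟨e₀, st, fun h => hL₀.st_notMem (h ▸ he₀)⟩
  exact ⟨_, hL.isOneOneEdgeOrder hall hcard⟩

end EdgeOrders
end

section
/- Let D = (P_0, …, P_{m−n}) be a (2,1)-edge-order of a graph G through rt avoiding ru. Then for every index i with 0 ≤ i < m−n, the subgraph \overline{G_i} of G induced by the edges not in P_0 ∪ ⋯ ∪ P_i is connected. -/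
namespace EdgeOrders

variable {V E V' E' : Type}

variable {ends : E → Sym2 V}

/-! Going down the ears, `\overline{G_{i-1}}` is `\overline{G_i}` together with the ear `P_i`.
Non-separateness says that `P_i` meets `\overline{G_i}` (at an inner vertex if `P_i` is long,
at an endpoint if it is short), so by downward induction every vertex of `\overline{G_i}` is
joined to `r` inside `\overline{G_i}`; the induction starts at the last ear `ru`, which
contains `r`. -/

section Walks

variable {S : Set E} {u v w x y : V} {vs : List V} {es : List E}

protected lemma HasWalk.refl (S : Set E) (v : V) : HasWalk ends S v v :=
  ⟨[v], [], .nil v, rfl, rfl, by simp⟩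

lemma HasWalk.cons {e : E} (he : ends e = s(u, v)) (heS : e ∈ S) (h : HasWalk ends S v w) :
    HasWalk ends S u w := by
  obtain ⟨_ | ⟨v', vs⟩, es, hw, hh, hl, hes⟩ := h
  · simp at hh
  · obtain rfl : v' = v := by simpa using hh
    refine ⟨u :: v' :: vs, e :: es, .cons he hw, rfl, by rwa [List.getLast?_cons_cons], ?_⟩
    simpa [heS] using hes

protected lemma HasWalk.trans (h₁ : HasWalk ends S u v) (h₂ : HasWalk ends S v w) :
    HasWalk ends S u w := by
  obtain ⟨vs, es, hw, hh, hl, hes⟩ := h₁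
  induction hw generalizing u with
  | nil x =>
    obtain rfl : x = u := by simpa using hh
    obtain rfl : x = v := by simpa using hl
    exact h₂
  | cons he _ ih =>
    obtain rfl := Option.some.inj hh
    simp only [List.mem_cons, forall_eq_or_imp] at hes
    exact .cons he hes.1 (ih rfl (by rwa [List.getLast?_cons_cons] at hl) hes.2)

protected lemma HasWalk.symm (h : HasWalk ends S u v) : HasWalk ends S v u := by
  obtain ⟨vs, es, hw, hh, hl, hes⟩ := h
  induction hw generalizing u with
  | nil x =>
    obtain rfl : x = u := by simpa using hh
    obtain rfl : x = v := by simpa using hl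
    exact .refl S x
  | cons he _ ih =>
    obtain rfl := Option.some.inj hh
    simp only [List.mem_cons, forall_eq_or_imp] at hes
    refine (ih rfl (by rwa [List.getLast?_cons_cons] at hl) hes.2).trans ?_
    exact .cons (by rw [he, Sym2.eq_swap]) hes.1 (.refl S _)

lemma HasWalk.mono {S' : Set E} (h : HasWalk ends S u v) (hS : S ⊆ S') :
    HasWalk ends S' u v := by
  obtain ⟨vs, es, hw, hh, hl, hes⟩ := h
  exact ⟨vs, es, hw, hh, hl, fun e he => hS (hes e he)⟩

lemma IsWalkSeq.hasWalk_of_mem (h : IsWalkSeq ends vs es) (hS : ∀ e ∈ es, e ∈ S)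
    (hx : x ∈ vs) (hy : y ∈ vs) : HasWalk ends S x y := by
  induction h generalizing x y with
  | nil v =>
    obtain rfl := List.mem_singleton.mp hx
    obtain rfl := List.mem_singleton.mp hy
    exact .refl S _
  | @cons u v vs e es he _ ih =>
    simp only [List.mem_cons, forall_eq_or_imp] at hS
    have to_v : ∀ z ∈ u :: v :: vs, HasWalk ends S z v := by
      intro z hz
      rcases List.mem_cons.mp hz with rfl | hz
      · exact .cons he hS.1 (.refl S v)
      · exact ih hS.2 hz List.mem_cons_self
    exact (to_v x hx).trans (to_v y hy).symm

lemma IsWalkSeq.mem_of_mem_ends (h : IsWalkSeq ends vs es) {e : E} (he : e ∈ es)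
    (hx : x ∈ ends e) : x ∈ vs := by
  induction h with
  | nil v => simp at he
  | cons he' _ ih =>
    rcases List.mem_cons.mp he with rfl | he
    · rw [he', Sym2.mem_iff] at hx
      rcases hx with rfl | rfl <;> simp
    · exact List.mem_cons_of_mem _ (ih he)

lemma IsWalkSeq.exists_mem_tail_dropLast (h : IsWalkSeq ends vs es) (hes : 2 ≤ es.length) :
    ∃ y, y ∈ vs.tail.dropLast := by
  cases h with
  | nil => simp at hes
  | @cons u v vs _ _ _ h =>
    cases h with
    | nil => simp at hes
    | cons => exact ⟨v, by simp⟩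

end Walks

namespace EarDecomposition

variable (D : EarDecomposition ends)

lemma remEdges_last : D.remEdges (Fin.last D.len) = ∅ :=
  Set.eq_empty_of_forall_notMem fun _ ⟨j, hj, _⟩ => (Fin.le_last j).not_gt hj

lemma remEdges_castSucc (i : Fin D.len) :
    D.remEdges i.castSucc = {e | e ∈ (D.ears i.succ).edges} ∪ D.remEdges i.succ := by
  ext e
  constructor
  · rintro ⟨j, hj, he⟩
    rcases (Fin.castSucc_lt_iff_succ_le.mp hj).eq_or_lt with rfl | hlt
    exacts [Or.inl he, Or.inr ⟨j, hlt, he⟩]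
  · rintro (he | ⟨j, hj, he⟩)
    exacts [⟨_, Fin.castSucc_lt_succ, he⟩, ⟨j, Fin.castSucc_lt_succ.trans hj, he⟩]

end EarDecomposition

namespace IsTwoOneEdgeOrder

variable {D : EarDecomposition ends} {rt ru : E}

lemma exists_mem_verts_mem_coverVerts_remEdges (hD : IsTwoOneEdgeOrder D rt ru) (j : Fin (D.len + 1)) (hj₀ : 0 < (j : ℕ))
    (hj : (j : ℕ) < D.len) :
    ∃ x ∈ (D.ears j).verts, x ∈ coverVerts ends (D.remEdges j) := by
  obtain ⟨hinner, hshort⟩ := hD.2.2 j hj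
  by_cases hlen : (D.ears j).edges.length = 1
  · obtain ⟨x, hx | hx, hxc⟩ := hshort hlen
    exacts [⟨x, List.mem_of_mem_head? hx, hxc⟩, ⟨x, List.mem_of_mem_getLast? hx, hxc⟩]
  · have hpos := List.length_pos_of_ne_nil (D.ear_nonempty j)
    obtain ⟨y, hy⟩ := (D.walk j).exists_mem_tail_dropLast (by omega)
    have hyv : y ∈ (D.ears j).verts := List.mem_of_mem_tail (List.mem_of_mem_dropLast hy)
    exact ⟨y, hyv, hinner y ⟨hyv, fun ⟨k, hk, hyk⟩ => D.ear_inner_new j hj₀ y hy k hk hyk⟩⟩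

lemma hasWalk_of_mem_coverVerts (hD : IsTwoOneEdgeOrder D rt ru) {r u : V} (hru : ends ru = s(r, u)) (i : Fin (D.len + 1)) :
    ∀ x ∈ coverVerts ends (D.remEdges i), HasWalk ends (D.remEdges i) x r := by
  induction i using Fin.reverseInduction with
  | last => simp [D.remEdges_last, coverVerts]
  | cast i ih =>
    rintro x ⟨e, he, hxe⟩
    rw [D.remEdges_castSucc] at he ⊢
    rcases he with he | he
    · obtain ⟨y, hy, hyr⟩ : ∃ y ∈ (D.ears i.succ).verts,
          HasWalk ends ({e | e ∈ (D.ears i.succ).edges} ∪ D.remEdges i.succ) y r := by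
        by_cases hlast : i.succ = Fin.last D.len
        · have hr : r ∈ ends ru := by simp [hru]
          rw [hlast]
          exact ⟨r, (D.walk _).mem_of_mem_ends (by simp [hD.2.1]) hr, .refl _ r⟩
        · obtain ⟨y, hy, hyc⟩ := hD.exists_mem_verts_mem_coverVerts_remEdges i.succ
            (Nat.succ_pos _) (Fin.val_lt_last hlast)
          exact ⟨y, hy, (ih y hyc).mono Set.subset_union_right⟩
      exact ((D.walk _).hasWalk_of_mem (fun e he => Or.inl he)
        ((D.walk _).mem_of_mem_ends he hxe) hy).trans hyr
    · exact (ih x ⟨e, he, hxe⟩).mono Set.subset_union_right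

end IsTwoOneEdgeOrder

theorem statement_2_general {V E : Type} (ends : E → Sym2 V)
    (rt ru : E) (r u : V)
    (hru : ends ru = s(r, u))
    (D : EarDecomposition ends) (hD : IsTwoOneEdgeOrder D rt ru) :
    ∀ i : Fin (D.len + 1), (i : ℕ) < D.len → ConnectedOn ends (D.remEdges i) := by
  intro i _ x hx y hy
  exact (hD.hasWalk_of_mem_coverVerts hru i x hx).trans
    (hD.hasWalk_of_mem_coverVerts hru i y hy).symm

/-- If `D` is a (2,1)-edge-order of `G` through `rt` avoiding
`ru`, then for every `0 ≤ i < m - n` the subgraph `\overline{G_i}` induced by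
the edges not in `P₀ ∪ ⋯ ∪ P_i` is connected. -/
theorem statement_2 {V E : Type} [Fintype V] [Fintype E] (ends : E → Sym2 V)
    (rt ru : E) (r t u : V)
    (hrt : ends rt = s(r, t)) (hru : ends ru = s(r, u)) (hne : rt ≠ ru)
    (D : EarDecomposition ends) (hD : IsTwoOneEdgeOrder D rt ru) :
    ∀ i : Fin (D.len + 1), (i : ℕ) < D.len → ConnectedOn ends (D.remEdges i) :=
  statement_2_general ends rt ru r u hru D hD

end EdgeOrders
end

section
/- Let D be a (2,1)-edge-order of a graph G through rt avoiding ru. Then for every vertex v of G, the ear P_{last_D(v)} has v as an endpoint. -/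
/-!
Let `e` be an edge at `v` of maximal birth `i = last(v)`; then `v` lies on `P_i`. If `v` were
not an endpoint of `P_i`, it would be an inner vertex of `P_i`. The last ear is the single
edge `ru` and has no inner vertices, so `i < m - n`, and non-separateness puts `v` on an edge
of `\overline{G_i}`, i.e. on an edge born after `i`, contradicting the maximality of `i`.
-/

namespace EdgeOrders

variable {V E V' E' : Type}

variable {ends : E → Sym2 V}

namespace IsWalkSeq

lemma mem_verts_of_mem_ends {vs : List V} {es : List E} (h : IsWalkSeq ends vs es)
    {e : E} (he : e ∈ es) {x : V} (hx : x ∈ ends e) : x ∈ vs := by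
  induction h with
  | nil => simp at he
  | cons hends _ ih =>
    rcases List.mem_cons.1 he with rfl | he
    · rw [hends, Sym2.mem_iff] at hx
      rcases hx with rfl | rfl <;> simp
    · exact List.mem_cons_of_mem _ (ih he)

lemma exists_mem_ends_of_mem_verts {vs : List V} {es : List E} (h : IsWalkSeq ends vs es)
    (hes : es ≠ []) {x : V} (hx : x ∈ vs) : ∃ e ∈ es, x ∈ ends e := by
  induction h with
  | nil => exact absurd rfl hes
  | @cons u w _ e es' hends hw ih =>
    rcases List.mem_cons.1 hx with rfl | hx
    · exact ⟨e, List.mem_cons_self, hends ▸ Sym2.mem_mk_left _ _⟩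
    · rcases eq_or_ne es' [] with rfl | hes'
      · cases hw
        obtain rfl : x = w := by simpa using hx
        exact ⟨e, List.mem_cons_self, hends ▸ Sym2.mem_mk_right _ _⟩
      · obtain ⟨f, hf, hxf⟩ := ih hes' hx
        exact ⟨f, List.mem_cons_of_mem _ hf, hxf⟩

lemma tail_dropLast_eq_nil {vs : List V} {e : E} (h : IsWalkSeq ends vs [e]) :
    vs.tail.dropLast = [] := by
  obtain _ | ⟨_, hw⟩ := h
  cases hw
  rfl

end IsWalkSeq

lemma _root_.List.mem_tail_dropLast_of_ne_head_of_ne_getLast {α : Type*} {l : List α} {x : α}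
    (hx : x ∈ l) (hhead : l.head? ≠ some x) (hlast : l.getLast? ≠ some x) :
    x ∈ l.tail.dropLast := by
  obtain _ | ⟨a, l⟩ := l
  · simp at hx
  have hxl : x ∈ l := (List.mem_cons.1 hx).resolve_left fun h => hhead (by simp [h])
  have hne : l ≠ [] := List.ne_nil_of_mem hxl
  rw [← List.dropLast_append_getLast hne, List.mem_append, List.mem_singleton] at hxl
  refine hxl.resolve_right fun h => hlast ?_
  rw [h, List.getLast?_cons, List.getLast?_eq_some_getLast hne]
  rfl

namespace EarDecomposition

variable (D : EarDecomposition ends)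

lemma mem_ears_birthE (e : E) : e ∈ (D.ears (D.birthE e)).edges :=
  (D.partition e).exists.choose_spec

lemma birthE_eq_of_mem {e : E} {j : Fin (D.len + 1)} (h : e ∈ (D.ears j).edges) :
    D.birthE e = j :=
  (D.partition e).unique (D.mem_ears_birthE e) h

lemma mem_innerVerts_of_mem_tail_dropLast {i : Fin (D.len + 1)} {x : V}
    (hx : x ∈ (D.ears i).verts.tail.dropLast) : x ∈ D.innerVerts i := by
  refine ⟨List.mem_of_mem_tail (List.mem_of_mem_dropLast hx), ?_⟩
  rintro ⟨j, hji, hxj⟩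
  rcases Nat.eq_zero_or_pos i with hi | hi
  · exact absurd hji (by simp [Fin.lt_def, hi])
  · exact D.ear_inner_new i hi x hx j hji hxj

variable [Fintype E]

lemma birthE_le_lastV {v : V} {e : E} (hv : v ∈ ends e) : (D.birthE e : ℕ) ≤ D.lastV v := by
  classical
  exact Finset.le_sup (f := fun e => (D.birthE e : ℕ)) (by simpa using hv)

lemma exists_birthE_eq_lastV (v : V) : ∃ e, v ∈ ends e ∧ (D.birthE e : ℕ) = D.lastV v := by
  classical
  obtain ⟨i, hvi⟩ := D.covers v
  obtain ⟨e, -, hve⟩ := (D.walk i).exists_mem_ends_of_mem_verts (D.ear_nonempty i) hvi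
  obtain ⟨e', he', hsup⟩ := Finset.exists_mem_eq_sup
    (Finset.univ.filter fun e => v ∈ ends e) ⟨e, by simpa using hve⟩ fun e => (D.birthE e : ℕ)
  exact ⟨e', by simpa using he', hsup.symm⟩

end EarDecomposition

namespace IsTwoOneEdgeOrder

variable {D : EarDecomposition ends} {rt ru : E}

lemma tail_dropLast_last_eq_nil (hD : IsTwoOneEdgeOrder D rt ru) :
    (D.ears (Fin.last D.len)).verts.tail.dropLast = [] :=
  (hD.2.1 ▸ D.walk (Fin.last D.len)).tail_dropLast_eq_nil

/-- Non-separateness keeps an inner vertex of `P_i` on an edge of a later ear. -/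
lemma lt_lastV_of_mem_innerVerts [Fintype E] (hD : IsTwoOneEdgeOrder D rt ru)
    {i : Fin (D.len + 1)} (hi : (i : ℕ) < D.len) {v : V} (hv : v ∈ D.innerVerts i) : (i : ℕ) < D.lastV v := by
  obtain ⟨e, ⟨j, hij, hej⟩, hve⟩ := (hD.2.2 i hi).1 v hv
  calc (i : ℕ) < j := hij
    _ = D.birthE e := by rw [D.birthE_eq_of_mem hej]
    _ ≤ D.lastV v := D.birthE_le_lastV hve

end IsTwoOneEdgeOrder

theorem statement_5_general {V E : Type} [Fintype E] (ends : E → Sym2 V)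
    (rt ru : E)
    (D : EarDecomposition ends) (hD : IsTwoOneEdgeOrder D rt ru) :
    ∀ v : V, ∃ i : Fin (D.len + 1), (i : ℕ) = D.lastV v ∧
      ((D.ears i).verts.head? = some v ∨ (D.ears i).verts.getLast? = some v) := by
  intro v
  obtain ⟨e, hve, hlast⟩ := D.exists_birthE_eq_lastV v
  refine ⟨D.birthE e, hlast, ?_⟩
  by_contra! hend
  have hinner : v ∈ (D.ears (D.birthE e)).verts.tail.dropLast :=
    List.mem_tail_dropLast_of_ne_head_of_ne_getLast
      ((D.walk _).mem_verts_of_mem_ends (D.mem_ears_birthE e) hve) hend.1 hend.2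
  rcases (Fin.le_last (D.birthE e)).eq_or_lt with hi | hi
  · rw [hi, hD.tail_dropLast_last_eq_nil] at hinner
    simp at hinner
  · have := hD.lt_lastV_of_mem_innerVerts hi (D.mem_innerVerts_of_mem_tail_dropLast hinner)
    omega

/-- If `D` is a (2,1)-edge-order of `G` through `rt` avoiding
`ru`, then for every vertex `v`, the ear `P_{last(v)}` has `v` as an endpoint. -/
theorem statement_5 {V E : Type} [Fintype V] [Fintype E] (ends : E → Sym2 V)
    (rt ru : E) (r t u : V)
    (hrt : ends rt = s(r, t)) (hru : ends ru = s(r, u)) (hne : rt ≠ ru)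
    (D : EarDecomposition ends) (hD : IsTwoOneEdgeOrder D rt ru) :
    ∀ v : V, ∃ i : Fin (D.len + 1), (i : ℕ) = D.lastV v ∧
      ((D.ears i).verts.head? = some v ∨ (D.ears i).verts.getLast? = some v) :=
  statement_5_general ends rt ru D hD

end EdgeOrders
end
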